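/- Let S and T be positive definite symmetric n×n matrices with S ⪯ T, let m ∈ ℝ^n, and let η > 0. Define Ψ_S(m) = η tr(√(mm^T + S)) and Ψ_T(m) = η tr(√(mm^T + T)). Then 0 ≤ Ψ_T(m) − Ψ_S(m) ≤ η (tr(√T) − tr(√S)). -/

import Mathlib

open Matrix
open scoped Classical

/-- The positive semidefinite square root of a matrix (zero if not PSD). -/
noncomputable def sqrtM {n : ℕ} (A : Matrix (Fin n) (Fin n) ℝ) : Matrix (Fin n) (Fin n) ℝ :=
  if h : A.PosSemidef then
    (h.1.eigenvectorUnitary : Matrix (Fin n) (Fin n) ℝ) * diagonal (Real.sqrt ∘ h.1.eigenvalues) *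
      (star h.1.eigenvectorUnitary : Matrix (Fin n) (Fin n) ℝ) else 0

/-- Euclidean norm of a vector. -/
noncomputable def euclNorm {n : ℕ} (v : Fin n → ℝ) : ℝ := Real.sqrt (v ⬝ᵥ v)

/-- The ℓ₂ operator (spectral) norm of a matrix. -/
noncomputable def opNorm {n : ℕ} (A : Matrix (Fin n) (Fin n) ℝ) : ℝ :=
  ⨆ u : {u : Fin n → ℝ // euclNorm u ≤ 1}, euclNorm (A *ᵥ u)

/-!
The tangent inequality `2 tr √Y ≤ tr (√X⁻¹ Y) + tr √X` says that `X ↦ tr √X` has gradient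
`E ↦ tr (√X⁻¹ E) / 2`, and this gradient is antitone in `X` because both the square root
and the inverse are operator monotone. Cut the segment from `S` to `T` into `k` steps
`E = (T - S) / k`. Along a step from `X`, `tr √(M + ·)` grows by at most the gradient at
`M + X`, which is at most the gradient at `X`, while `tr √` grows by at least the gradient at
`X + E`. Summing over the steps, the two increments differ by at most the boundary gradient
terms, which are `O(1/k)`.
-/

open scoped MatrixOrder
open Filter

section

variable {n : ℕ} {A B E M P Q S T X Y : Matrix (Fin n) (Fin n) ℝ}

lemma sqrtM_eq_sqrt (hA : A.PosSemidef) : sqrtM A = CFC.sqrt A := by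
  rw [CFC.sqrt_eq_real_sqrt A hA.nonneg, cfcₙ_eq_cfc, hA.1.cfc_eq, sqrtM, dif_pos hA]
  rfl

lemma sqrtM_posSemidef (hA : A.PosSemidef) : (sqrtM A).PosSemidef :=
  sqrtM_eq_sqrt hA ▸ (CFC.sqrt_nonneg A).posSemidef

lemma sqrtM_mul_self (hA : A.PosSemidef) : sqrtM A * sqrtM A = A :=
  sqrtM_eq_sqrt hA ▸ CFC.sqrt_mul_sqrt_self A hA.nonneg

lemma sqrtM_posDef (hA : A.PosDef) : (sqrtM A).PosDef := by
  rw [sqrtM_eq_sqrt hA.posSemidef, ← isStrictlyPositive_iff_posDef]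
  exact IsStrictlyPositive.sqrt A hA.isStrictlyPositive

lemma inv_sqrtM_mul_self (hA : A.PosDef) : (sqrtM A)⁻¹ * A = sqrtM A := by
  have h := nonsing_inv_mul_cancel_left (sqrtM A) (sqrtM A) (sqrtM_posDef hA).det_pos.ne'.isUnit
  rwa [sqrtM_mul_self hA.posSemidef] at h

lemma Matrix.PosDef.of_le (hA : A.PosDef) (hAB : A ≤ B) : B.PosDef := by
  simpa using hA.add_posSemidef hAB

lemma Matrix.PosSemidef.trace_mul_nonneg (hA : A.PosSemidef) (hB : B.PosSemidef) :
    0 ≤ (A * B).trace := by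
  have h := (hA.conjTranspose_mul_mul_same (sqrtM B)).trace_nonneg
  rwa [(sqrtM_posSemidef hB).isHermitian.eq, trace_mul_cycle, sqrtM_mul_self hB,
    trace_mul_comm] at h

lemma Matrix.trace_mul_le_trace_mul_of_le (hAB : A ≤ B) (hE : E.PosSemidef) :
    (A * E).trace ≤ (B * E).trace := by
  have h := PosSemidef.trace_mul_nonneg hAB hE
  rwa [Matrix.sub_mul, trace_sub, sub_nonneg] at h

lemma Matrix.PosDef.inv_anti (hA : A.PosDef) (hAB : A ≤ B) : B⁻¹ ≤ A⁻¹ := by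
  have hB := hA.of_le hAB
  have hsq :
      (B⁻¹ - A⁻¹)ᴴ * A * (B⁻¹ - A⁻¹) + (B⁻¹)ᴴ * (B - A) * B⁻¹ = A⁻¹ - B⁻¹ := by
    rw [conjTranspose_sub, hB.inv.isHermitian.eq, hA.inv.isHermitian.eq]
    simp only [Matrix.mul_sub, Matrix.sub_mul, Matrix.mul_assoc,
      mul_nonsing_inv _ hA.det_pos.ne'.isUnit, nonsing_inv_mul _ hA.det_pos.ne'.isUnit,
      mul_nonsing_inv _ hB.det_pos.ne'.isUnit, Matrix.mul_one, Matrix.one_mul]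
    abel
  rw [Matrix.le_iff, ← hsq]
  exact (hA.posSemidef.conjTranspose_mul_mul_same _).add (hAB.conjTranspose_mul_mul_same _)

lemma Matrix.IsHermitian.dotProduct_mulVec_comm (hX : X.IsHermitian) (v w : Fin n → ℝ) :
    v ⬝ᵥ (X *ᵥ w) = (X *ᵥ v) ⬝ᵥ w := by
  rw [dotProduct_mulVec, ← mulVec_transpose, ← conjTranspose_eq_transpose_of_trivial, hX.eq]

lemma sqrtM_le_sqrtM (hA : A.PosSemidef) (hB : B.PosDef) (hAB : A ≤ B) : sqrtM A ≤ sqrtM B := by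
  set P := sqrtM A
  set Q := sqrtM B
  have hH : (Q - P).IsHermitian :=
    (sqrtM_posSemidef hB.posSemidef).isHermitian.sub (sqrtM_posSemidef hA).isHermitian
  rw [Matrix.le_iff, hH.posSemidef_iff_eigenvalues_nonneg]
  intro i
  set μ := hH.eigenvalues i
  set v : Fin n → ℝ := (hH.eigenvectorBasis i).ofLp
  have hv : (Q - P) *ᵥ v = μ • v := hH.mulVec_eigenvectorBasis i
  have hv0 : v ≠ 0 := fun h => hH.eigenvectorBasis.orthonormal.ne_zero i (by simpa [v] using h)
  have hfactor : B - A = Q * (Q - P) + (Q - P) * P := by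
    rw [Matrix.mul_sub, Matrix.sub_mul, sqrtM_mul_self hB.posSemidef, sqrtM_mul_self hA]
    abel
  have hquad : v ⬝ᵥ ((B - A) *ᵥ v) = μ * (v ⬝ᵥ (Q *ᵥ v) + v ⬝ᵥ (P *ᵥ v)) := by
    rw [hfactor, add_mulVec, dotProduct_add, ← mulVec_mulVec, ← mulVec_mulVec, hv,
      hH.dotProduct_mulVec_comm, hv, mulVec_smul, dotProduct_smul, smul_dotProduct]
    simp only [smul_eq_mul]
    ring
  have hQ : 0 < v ⬝ᵥ (Q *ᵥ v) := by simpa using (sqrtM_posDef hB).dotProduct_mulVec_pos hv0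
  have hP : 0 ≤ v ⬝ᵥ (P *ᵥ v) := by
    simpa using (sqrtM_posSemidef hA).dotProduct_mulVec_nonneg v
  have hBA : 0 ≤ v ⬝ᵥ ((B - A) *ᵥ v) := by simpa using hAB.dotProduct_mulVec_nonneg v
  exact nonneg_of_mul_nonneg_left (hquad ▸ hBA) (by linarith)

lemma trace_sqrtM_le_trace_sqrtM (hA : A.PosSemidef) (hB : B.PosDef) (hAB : A ≤ B) :
    (sqrtM A).trace ≤ (sqrtM B).trace := by
  have h := (sqrtM_le_sqrtM hA hB hAB).trace_nonneg
  rwa [trace_sub, sub_nonneg] at h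

lemma trace_inv_sqrtM_mul_anti (hA : A.PosDef) (hAB : A ≤ B) (hE : E.PosSemidef) :
    ((sqrtM B)⁻¹ * E).trace ≤ ((sqrtM A)⁻¹ * E).trace :=
  trace_mul_le_trace_mul_of_le
    ((sqrtM_posDef hA).inv_anti (sqrtM_le_sqrtM hA.posSemidef (hA.of_le hAB) hAB)) hE

lemma Matrix.IsHermitian.two_mul_trace_le (hP : P.IsHermitian) (hQ : Q.PosDef) :
    2 * P.trace ≤ (Q⁻¹ * (P * P)).trace + Q.trace := by
  have hQu : IsUnit Q.det := hQ.det_pos.ne'.isUnit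
  have hsq : (P - Q)ᴴ * Q⁻¹ * (P - Q) = P * (Q⁻¹ * P) - P - P + Q := by
    rw [conjTranspose_sub, hP.eq, hQ.isHermitian.eq]
    simp only [Matrix.mul_sub, Matrix.sub_mul, Matrix.mul_assoc,
      mul_nonsing_inv_cancel_left _ _ hQu, nonsing_inv_mul _ hQu, Matrix.mul_one]
    abel
  have h := (hQ.inv.posSemidef.conjTranspose_mul_mul_same (P - Q)).trace_nonneg
  rw [hsq, trace_add, trace_sub, trace_sub, trace_mul_comm, Matrix.mul_assoc] at h
  linarith

lemma two_mul_trace_sqrtM_le (hX : X.PosDef) (hY : Y.PosSemidef) :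
    2 * (sqrtM Y).trace ≤ ((sqrtM X)⁻¹ * Y).trace + (sqrtM X).trace := by
  simpa only [sqrtM_mul_self hY] using
    (sqrtM_posSemidef hY).isHermitian.two_mul_trace_le (sqrtM_posDef hX)

lemma two_mul_trace_sqrtM_add_le (hX : X.PosDef) (hE : E.PosSemidef) :
    2 * (sqrtM (X + E)).trace ≤ 2 * (sqrtM X).trace + ((sqrtM X)⁻¹ * E).trace := by
  have h := two_mul_trace_sqrtM_le hX (hX.posSemidef.add hE)
  rw [Matrix.mul_add, trace_add, inv_sqrtM_mul_self hX] at h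
  linarith

lemma le_two_mul_trace_sqrtM_add (hX : X.PosDef) (hE : E.PosSemidef) :
    2 * (sqrtM X).trace + ((sqrtM (X + E))⁻¹ * E).trace ≤ 2 * (sqrtM (X + E)).trace := by
  have hXE := hX.add_posSemidef hE
  have h := two_mul_trace_sqrtM_le hXE hX.posSemidef
  have hsplit := congrArg trace (inv_sqrtM_mul_self hXE)
  rw [Matrix.mul_add, trace_add] at hsplit
  linarith

lemma trace_sqrtM_gap_add_le (hM : M.PosSemidef) (hX : X.PosDef) (hE : E.PosSemidef) :
    2 * ((sqrtM (M + (X + E))).trace - (sqrtM (X + E)).trace) + ((sqrtM (X + E))⁻¹ * E).trace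
      ≤ 2 * ((sqrtM (M + X)).trace - (sqrtM X).trace) + ((sqrtM X)⁻¹ * E).trace := by
  have hMX : (M + X).PosDef := hX.posSemidef_add hM
  have hupper := two_mul_trace_sqrtM_add_le hMX hE
  have hgrad := trace_inv_sqrtM_mul_anti hX (le_add_of_nonneg_left hM.nonneg) hE
  have hlower := le_two_mul_trace_sqrtM_add hX hE
  rw [← add_assoc]
  linarith

lemma trace_sqrtM_gap_add_nsmul_le (hM : M.PosSemidef) (hX : X.PosDef) (hE : E.PosSemidef)
    (k : ℕ) :
    2 * ((sqrtM (M + (X + k • E))).trace - (sqrtM (X + k • E)).trace)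
        + ((sqrtM (X + k • E))⁻¹ * E).trace
      ≤ 2 * ((sqrtM (M + X)).trace - (sqrtM X).trace) + ((sqrtM X)⁻¹ * E).trace := by
  induction k with
  | zero => simp
  | succ k ih =>
    have hXk : (X + k • E).PosDef := hX.add_posSemidef (nsmul_nonneg hE.nonneg k).posSemidef
    rw [succ_nsmul, ← add_assoc X]
    exact (trace_sqrtM_gap_add_le hM hXk hE).trans ih

lemma trace_sqrtM_gap_sub_le_div (hM : M.PosSemidef) (hS : S.PosDef) (hST : S ≤ T) {k : ℕ}
    (hk : k ≠ 0) :
    ((sqrtM (M + T)).trace - (sqrtM T).trace) - ((sqrtM (M + S)).trace - (sqrtM S).trace)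
      ≤ (((sqrtM S)⁻¹ * (T - S)).trace - ((sqrtM T)⁻¹ * (T - S)).trace) / 2 / k := by
  have hk' : (k : ℝ) ≠ 0 := Nat.cast_ne_zero.mpr hk
  have hpath : S + k • ((k : ℝ)⁻¹ • (T - S)) = T := by
    rw [← Nat.cast_smul_eq_nsmul ℝ, smul_smul, mul_inv_cancel₀ hk', one_smul, add_sub_cancel]
  have hE : ((k : ℝ)⁻¹ • (T - S)).PosSemidef := hST.smul (inv_nonneg.mpr k.cast_nonneg)
  have h := trace_sqrtM_gap_add_nsmul_le hM hS hE k
  rw [hpath, Matrix.mul_smul, Matrix.mul_smul, trace_smul, trace_smul, smul_eq_mul,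
    smul_eq_mul] at h
  calc _ ≤ ((k : ℝ)⁻¹ * ((sqrtM S)⁻¹ * (T - S)).trace
          - (k : ℝ)⁻¹ * ((sqrtM T)⁻¹ * (T - S)).trace) / 2 := by linarith
    _ = _ := by ring

lemma trace_sqrtM_add_sub_le (hM : M.PosSemidef) (hS : S.PosDef) (hST : S ≤ T) :
    (sqrtM (M + T)).trace - (sqrtM (M + S)).trace ≤ (sqrtM T).trace - (sqrtM S).trace := by
  rw [← sub_nonpos, sub_sub_sub_comm]
  exact ge_of_tendsto (tendsto_const_div_atTop_nhds_zero_nat _)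
    ((eventually_ne_atTop 0).mono fun k hk => trace_sqrtM_gap_sub_le_div hM hS hST hk)

end

theorem leon_upper_stability_general {n : ℕ} {S T : Matrix (Fin n) (Fin n) ℝ}
    (hS : S.PosDef) (hST : (T - S).PosSemidef)
    (m : Fin n → ℝ) {η : ℝ} (hη : 0 < η) :
    0 ≤ η * (sqrtM (vecMulVec m m + T)).trace - η * (sqrtM (vecMulVec m m + S)).trace ∧
    η * (sqrtM (vecMulVec m m + T)).trace - η * (sqrtM (vecMulVec m m + S)).trace
      ≤ η * ((sqrtM T).trace - (sqrtM S).trace) := by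
  have hM : (vecMulVec m m).PosSemidef := by simpa using posSemidef_vecMulVec_self_star m
  rw [← mul_sub]
  refine ⟨mul_nonneg hη.le (sub_nonneg.mpr ?_), mul_le_mul_of_nonneg_left ?_ hη.le⟩
  · exact trace_sqrtM_le_trace_sqrtM (hM.add hS.posSemidef) ((hS.of_le hST).posSemidef_add hM)
      (add_le_add_right hST _)
  · exact trace_sqrtM_add_sub_le hM hS hST

theorem leon_upper_stability {n : ℕ} {S T : Matrix (Fin n) (Fin n) ℝ}
    (hS : S.PosDef) (hT : T.PosDef) (hST : (T - S).PosSemidef)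
    (m : Fin n → ℝ) {η : ℝ} (hη : 0 < η) :
    0 ≤ η * (sqrtM (vecMulVec m m + T)).trace - η * (sqrtM (vecMulVec m m + S)).trace ∧
    η * (sqrtM (vecMulVec m m + T)).trace - η * (sqrtM (vecMulVec m m + S)).trace
      ≤ η * ((sqrtM T).trace - (sqrtM S).trace) :=
  leon_upper_stability_general hS hST m hη
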